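/- arXiv:2006.07832 — 3 statements merged into one kernel-verified Lean document; each statement's English description precedes it below -/
import Mathlib

section
/- Let ε > 0, N ≥ 1, v_max > 0, and let I be a finite index set with value function val : I → ℝ satisfying 0 ≤ val(i) ≤ v_max for all i. Define val'(i) = ⌊val(i)·N/(ε·v_max)⌋. Let S, O ⊆ I be finite sets with |O| ≤ N such that Σ_{i∈O} val'(i) ≤ Σ_{i∈S} val'(i). Then Σ_{i∈O} val(i) ≤ Σ_{i∈S} val(i) + ε·v_max. -/
/-!
Rounding down to multiples of `δ = ε·vmax/N` loses less than `δ` per item, so comparing rounded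
sums costs at most `|O|·δ ≤ N·δ = ε·vmax` on the original values.
-/

open Finset

section FloorDiv

variable {δ : ℝ}

lemma mul_floor_div_le (hδ : 0 < δ) (x : ℝ) : δ * ⌊x / δ⌋ ≤ x := by
  rw [mul_comm, ← le_div_iff₀ hδ]
  exact Int.floor_le _

lemma lt_mul_floor_div_add_one (hδ : 0 < δ) (x : ℝ) : x < δ * (⌊x / δ⌋ + 1) := by
  rw [mul_comm, ← div_lt_iff₀ hδ]
  exact Int.lt_floor_add_one _

lemma sum_le_sum_add_card_mul_of_sum_floor_div_le {ι : Type*} {f : ι → ℝ} (hδ : 0 < δ)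
    {s t : Finset ι} (h : ∑ i ∈ s, ⌊f i / δ⌋ ≤ ∑ i ∈ t, ⌊f i / δ⌋) :
    ∑ i ∈ s, f i ≤ ∑ i ∈ t, f i + #s * δ := by
  have h' : ∑ i ∈ s, (⌊f i / δ⌋ : ℝ) ≤ ∑ i ∈ t, (⌊f i / δ⌋ : ℝ) := by exact_mod_cast h
  calc ∑ i ∈ s, f i ≤ ∑ i ∈ s, δ * (⌊f i / δ⌋ + 1) :=
        sum_le_sum fun i _ => (lt_mul_floor_div_add_one hδ (f i)).le
    _ = δ * ∑ i ∈ s, (⌊f i / δ⌋ : ℝ) + #s * δ := by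
        simp only [mul_add, mul_one, sum_add_distrib, sum_const, nsmul_eq_mul, mul_sum, mul_comm]
    _ ≤ δ * ∑ i ∈ t, (⌊f i / δ⌋ : ℝ) + #s * δ := by gcongr
    _ ≤ ∑ i ∈ t, f i + #s * δ := by
        rw [mul_sum]
        gcongr with i
        exact mul_floor_div_le hδ (f i)

end FloorDiv

theorem rounded_sum_approx_general {α : Type*}
    (ε : ℝ) (hε : 0 < ε) (N : ℕ) (hN : 1 ≤ N) (vmax : ℝ) (hvmax : 0 < vmax)
    (val : α → ℝ)
    (S O : Finset α) (hOcard : O.card ≤ N)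
    (hsum : (∑ i ∈ O, ⌊val i * N / (ε * vmax)⌋) ≤ ∑ i ∈ S, ⌊val i * N / (ε * vmax)⌋) :
    (∑ i ∈ O, val i) ≤ (∑ i ∈ S, val i) + ε * vmax := by
  have hNpos : (0 : ℝ) < N := by exact_mod_cast hN
  have hδ : 0 < ε * vmax / N := by positivity
  have hsum' : ∑ i ∈ O, ⌊val i / (ε * vmax / N)⌋ ≤ ∑ i ∈ S, ⌊val i / (ε * vmax / N)⌋ := by
    simpa only [div_div_eq_mul_div] using hsum
  calc ∑ i ∈ O, val i ≤ ∑ i ∈ S, val i + #O * (ε * vmax / N) :=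
        sum_le_sum_add_card_mul_of_sum_floor_div_le hδ hsum'
    _ ≤ ∑ i ∈ S, val i + N * (ε * vmax / N) := by gcongr
    _ = ∑ i ∈ S, val i + ε * vmax := by rw [mul_div_cancel₀ _ hNpos.ne']

theorem rounded_sum_approx {α : Type*} [DecidableEq α]
    (ε : ℝ) (hε : 0 < ε) (N : ℕ) (hN : 1 ≤ N) (vmax : ℝ) (hvmax : 0 < vmax)
    (I : Finset α) (val : α → ℝ)
    (hval : ∀ i ∈ I, 0 ≤ val i ∧ val i ≤ vmax)
    (S O : Finset α) (hS : S ⊆ I) (hO : O ⊆ I) (hOcard : O.card ≤ N)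
    (hsum : (∑ i ∈ O, ⌊val i * N / (ε * vmax)⌋) ≤ ∑ i ∈ S, ⌊val i * N / (ε * vmax)⌋) :
    (∑ i ∈ O, val i) ≤ (∑ i ∈ S, val i) + ε * vmax :=
  rounded_sum_approx_general ε hε N hN vmax hvmax val S O hOcard hsum
end

section
/- Let 0 < ε < 1, let n ≥ 1 be a natural number and v > 0 a real. Let S be a finite set with value function val : S → ℝ, val(i) ≥ 0 for all i, and set val''(i) = ⌊n·val(i)/(ε·v)⌋. If |S| ≤ n and n(1−2ε)/ε − 1 ≤ Σ_{i∈S} val''(i) ≤ n(1+2ε)/ε, then (1−3ε)·v ≤ Σ_{i∈S} val(i) ≤ (1+3ε)·v. -/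
/-! Rounding each scaled value `n·val i/(ε·v)` down loses less than `1`, so the scaled total
`n·(∑ val)/(ε·v)` lies between `∑ val''` and `∑ val'' + |S| ≤ ∑ val'' + n`. Multiplying the
assumed range by `ε·v/n`, the two losses `ε·v/n ≤ ε·v` and `ε·v` fit into the slack between
`2ε` and `3ε`. -/

section FloorSum

variable {ι K : Type*} [Ring K] [LinearOrder K] [IsStrictOrderedRing K] [FloorRing K]

theorem Finset.sum_floor_le (s : Finset ι) (f : ι → K) :
    ((∑ i ∈ s, ⌊f i⌋ : ℤ) : K) ≤ ∑ i ∈ s, f i := by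
  push_cast
  exact Finset.sum_le_sum fun i _ => Int.floor_le (f i)

theorem Finset.sum_le_sum_floor_add_card (s : Finset ι) (f : ι → K) :
    ∑ i ∈ s, f i ≤ ((∑ i ∈ s, ⌊f i⌋ : ℤ) : K) + s.card := by
  calc ∑ i ∈ s, f i ≤ ∑ i ∈ s, ((⌊f i⌋ : K) + 1) :=
        Finset.sum_le_sum fun i _ => (Int.lt_floor_add_one (f i)).le
    _ = ((∑ i ∈ s, ⌊f i⌋ : ℤ) : K) + s.card := by
        push_cast
        rw [Finset.sum_add_distrib, Finset.sum_const, nsmul_one]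

end FloorSum

section

variable {ε v s : ℝ} {n : ℕ}

theorem one_sub_three_mul_le_of_scaled_ge (hε : 0 < ε) (hv : 0 < v) (hn : 1 ≤ n)
    (h : n * (1 - 2 * ε) / ε - 1 ≤ n * s / (ε * v)) : (1 - 3 * ε) * v ≤ s := by
  have hn' : (1 : ℝ) ≤ n := by exact_mod_cast hn
  have hlhs : (n * (1 - 2 * ε) / ε - 1) * (ε * v) = n * (1 - 2 * ε) * v - ε * v := by
    field_simp
  rw [le_div_iff₀ (by positivity), hlhs] at h
  have key : (n : ℝ) * ((1 - 3 * ε) * v) ≤ n * s := by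
    nlinarith [mul_pos hε hv]
  exact le_of_mul_le_mul_left key (by positivity)

theorem le_one_add_three_mul_of_scaled_le (hε : 0 < ε) (hv : 0 < v) (hn : 1 ≤ n)
    (h : n * s / (ε * v) ≤ n * (1 + 2 * ε) / ε + n) : s ≤ (1 + 3 * ε) * v := by
  have hrhs : (n * (1 + 2 * ε) / ε + n) * (ε * v) = n * ((1 + 3 * ε) * v) := by
    field_simp
    ring
  rw [div_le_iff₀ (by positivity), hrhs] at h
  exact le_of_mul_le_mul_left h (by positivity)

end

theorem value_from_rounded_range_general {α : Type*}
    (ε : ℝ) (hε : 0 < ε) (n : ℕ) (hn : 1 ≤ n) (v : ℝ) (hv : 0 < v)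
    (S : Finset α) (val : α → ℝ)
    (hcard : S.card ≤ n)
    (hlo : (n : ℝ) * (1 - 2 * ε) / ε - 1 ≤ (∑ i ∈ S, ⌊(n : ℝ) * val i / (ε * v)⌋ : ℤ))
    (hhi : ((∑ i ∈ S, ⌊(n : ℝ) * val i / (ε * v)⌋ : ℤ) : ℝ) ≤ (n : ℝ) * (1 + 2 * ε) / ε) :
    (1 - 3 * ε) * v ≤ (∑ i ∈ S, val i) ∧ (∑ i ∈ S, val i) ≤ (1 + 3 * ε) * v := by
  have hsum : ∑ i ∈ S, (n : ℝ) * val i / (ε * v) = n * (∑ i ∈ S, val i) / (ε * v) := by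
    rw [Finset.mul_sum, Finset.sum_div]
  have hfloor := S.sum_floor_le fun i => (n : ℝ) * val i / (ε * v)
  have hfloor_add_card := S.sum_le_sum_floor_add_card fun i => (n : ℝ) * val i / (ε * v)
  have hcard' : (S.card : ℝ) ≤ n := by exact_mod_cast hcard
  rw [hsum] at hfloor hfloor_add_card
  exact ⟨one_sub_three_mul_le_of_scaled_ge hε hv hn (hlo.trans hfloor),
    le_one_add_three_mul_of_scaled_le hε hv hn (by linarith)⟩

theorem value_from_rounded_range {α : Type*} [DecidableEq α]
    (ε : ℝ) (hε : 0 < ε) (hε1 : ε < 1) (n : ℕ) (hn : 1 ≤ n) (v : ℝ) (hv : 0 < v)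
    (S : Finset α) (val : α → ℝ) (hval : ∀ i ∈ S, 0 ≤ val i)
    (hcard : S.card ≤ n)
    (hlo : (n : ℝ) * (1 - 2 * ε) / ε - 1 ≤ (∑ i ∈ S, ⌊(n : ℝ) * val i / (ε * v)⌋ : ℤ))
    (hhi : ((∑ i ∈ S, ⌊(n : ℝ) * val i / (ε * v)⌋ : ℤ) : ℝ) ≤ (n : ℝ) * (1 + 2 * ε) / ε) :
    (1 - 3 * ε) * v ≤ (∑ i ∈ S, val i) ∧ (∑ i ∈ S, val i) ≤ (1 + 3 * ε) * v :=
  value_from_rounded_range_general ε hε n hn v hv S val hcard hlo hhi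
end

section
/- Let 0 < ε, let n ≥ 1 be a natural number and w > 0 a real. Let O be a finite set with weight function wt : O → ℝ, wt(i) ≥ 0, such that (1−ε)·w ≤ Σ_{i∈O} wt(i) ≤ (1+ε)·w and |O| ≤ n. Define wt''(i) = ⌈n·wt(i)/(ε·w)⌉. Then ⌈n(1−2ε)/ε⌉ ≤ Σ_{i∈O} wt''(i) ≤ ⌈n(1+2ε)/ε⌉. -/
/-!
Each ceiling exceeds its argument by less than one, so the sum of the rounded weights lies
between `n/(εw)` times the total weight and that quantity plus `|O| ≤ n`. The total weight is
within `εw` of `w`, which puts the scaled sum within `n` of `n/ε`; the rounding error adds at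
most another `n`, and `n/ε ± 2n = n(1 ± 2ε)/ε`.
-/

namespace Finset

variable {ι K : Type*} [Field K] [LinearOrder K] [IsStrictOrderedRing K] [FloorRing K]

theorem sum_le_sum_ceil (s : Finset ι) (f : ι → K) : ∑ i ∈ s, f i ≤ ∑ i ∈ s, (⌈f i⌉ : K) :=
  sum_le_sum fun i _ ↦ Int.le_ceil (f i)

theorem sum_ceil_le_sum_add_card (s : Finset ι) (f : ι → K) :
    ∑ i ∈ s, (⌈f i⌉ : K) ≤ ∑ i ∈ s, f i + #s := by
  calc ∑ i ∈ s, (⌈f i⌉ : K) ≤ ∑ i ∈ s, (f i + 1) :=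
        sum_le_sum fun i _ ↦ (Int.ceil_lt_add_one (f i)).le
    _ = ∑ i ∈ s, f i + #s := by rw [sum_add_distrib, sum_const, nsmul_one]

end Finset

theorem rounded_weight_range_general {α : Type*}
    (ε : ℝ) (hε : 0 < ε) (n : ℕ) (w : ℝ) (hw : 0 < w)
    (O : Finset α) (wt : α → ℝ)
    (hcard : O.card ≤ n)
    (hlo : (1 - ε) * w ≤ ∑ i ∈ O, wt i) (hhi : (∑ i ∈ O, wt i) ≤ (1 + ε) * w) :
    ⌈(n : ℝ) * (1 - 2 * ε) / ε⌉ ≤ (∑ i ∈ O, ⌈(n : ℝ) * wt i / (ε * w)⌉) ∧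
      (∑ i ∈ O, ⌈(n : ℝ) * wt i / (ε * w)⌉) ≤ ⌈(n : ℝ) * (1 + 2 * ε) / ε⌉ := by
  have hscale : ∑ i ∈ O, (n : ℝ) * wt i / (ε * w) = n * (∑ i ∈ O, wt i) / (ε * w) := by
    rw [Finset.mul_sum, Finset.sum_div]
  have hcard_real : (O.card : ℝ) ≤ n := by exact_mod_cast hcard
  have hscaled_lo : (n : ℝ) * (1 - 2 * ε) / ε ≤ n * (∑ i ∈ O, wt i) / (ε * w) :=
    calc (n : ℝ) * (1 - 2 * ε) / ε ≤ n * (1 - ε) / ε := by gcongr; linarith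
      _ = n * ((1 - ε) * w) / (ε * w) := by field_simp
      _ ≤ n * (∑ i ∈ O, wt i) / (ε * w) := by gcongr
  have hscaled_hi : (n : ℝ) * (∑ i ∈ O, wt i) / (ε * w) + O.card ≤ n * (1 + 2 * ε) / ε :=
    calc (n : ℝ) * (∑ i ∈ O, wt i) / (ε * w) + O.card ≤ n * ((1 + ε) * w) / (ε * w) + n := by
          gcongr
      _ = n * (1 + 2 * ε) / ε := by field_simp; ring
  constructor
  · rw [Int.ceil_le]
    push_cast
    exact hscaled_lo.trans (hscale ▸ O.sum_le_sum_ceil _)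
  · refine Int.cast_le.mp (le_trans ?_ (Int.le_ceil _))
    push_cast
    exact (O.sum_ceil_le_sum_add_card _).trans (hscale ▸ hscaled_hi)

theorem rounded_weight_range {α : Type*} [DecidableEq α]
    (ε : ℝ) (hε : 0 < ε) (n : ℕ) (hn : 1 ≤ n) (w : ℝ) (hw : 0 < w)
    (O : Finset α) (wt : α → ℝ) (hwt : ∀ i ∈ O, 0 ≤ wt i)
    (hcard : O.card ≤ n)
    (hlo : (1 - ε) * w ≤ ∑ i ∈ O, wt i) (hhi : (∑ i ∈ O, wt i) ≤ (1 + ε) * w) :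
    ⌈(n : ℝ) * (1 - 2 * ε) / ε⌉ ≤ (∑ i ∈ O, ⌈(n : ℝ) * wt i / (ε * w)⌉) ∧
      (∑ i ∈ O, ⌈(n : ℝ) * wt i / (ε * w)⌉) ≤ ⌈(n : ℝ) * (1 + 2 * ε) / ε⌉ :=
  rounded_weight_range_general ε hε n w hw O wt hcard hlo hhi
end
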